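/- arXiv:2502.06912 — 4 statements merged into one kernel-verified Lean document; each statement's English description precedes it below -/
import Mathlib

section
/- Let k ≥ 1 and let L = C₀ ]^{b₁}_{a₁} C₁ ]^{b₂}_{a₂} C₂ ⋯ ]^{b_k}_{a_k} C_k be an adjunct of k + 1 chains. Then the set of reducible elements of L is exactly Red(L) = {a₁, b₁, a₂, b₂, …, a_k, b_k}. -/
/-- An element of a lattice is join-reducible if it is the join of two elements
both distinct from it. -/
def JoinReducible {α : Type*} [Lattice α] (x : α) : Prop :=
  ∃ y z : α, y ≠ x ∧ z ≠ x ∧ y ⊔ z = x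

/-- An element of a lattice is meet-reducible if it is the meet of two elements
both distinct from it. -/
def MeetReducible {α : Type*} [Lattice α] (x : α) : Prop :=
  ∃ y z : α, y ≠ x ∧ z ≠ x ∧ y ⊓ z = x

/-- An element is reducible if it is join-reducible or meet-reducible. -/
def Reducible {α : Type*} [Lattice α] (x : α) : Prop :=
  JoinReducible x ∨ MeetReducible x

/-- `Red(L)`: the set of reducible elements of the lattice. -/
def RedSet (α : Type*) [Lattice α] : Set α := {x | Reducible x}

/-- `Irr(L)`: the set of doubly irreducible (i.e. non-reducible) elements. -/
def IrrSet (α : Type*) [Lattice α] : Set α := {x | ¬ Reducible x}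

/-- `AdjunctRep C₀ s l` : the subset `s`, with the order induced from the ambient
lattice, is an adjunct of chains starting with the chain `C₀`; the list `l` records, in
order, the adjoined chains together with their adjunct pairs, i.e.
`s = C₀ ]^{b₁}_{a₁} C₁ ]^{b₂}_{a₂} C₂ ⋯ ]^{b_k}_{a_k} C_k` with
`l = [(C₁,a₁,b₁), …, (C_k,a_k,b_k)]`.  In the step, the adjunct pair `(a,b)` lies in
the part `s` built so far, with `a < b` and `a` not covered by `b` in `s`, and the
ambient order on `s ∪ c` is exactly the adjunct order: for `x ∈ s` and `y ∈ c`,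
`x ≤ y ↔ x ≤ a` and `y ≤ x ↔ b ≤ x`. -/
inductive AdjunctRep {α : Type*} [Lattice α] (C₀ : Set α) :
    Set α → List (Set α × α × α) → Prop
  | base (hchain : IsChain (· ≤ ·) C₀) (hne : C₀.Nonempty) : AdjunctRep C₀ C₀ []
  | step {s : Set α} {l : List (Set α × α × α)} (c : Set α) (a b : α)
      (hs : AdjunctRep C₀ s l) (hc : IsChain (· ≤ ·) c) (hcne : c.Nonempty)
      (hdisj : Disjoint s c) (ha : a ∈ s) (hb : b ∈ s) (hab : a < b)
      (hnotcov : ∃ z ∈ s, a < z ∧ z < b)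
      (hord : ∀ x ∈ s, ∀ y ∈ c, (x ≤ y ↔ x ≤ a) ∧ (y ≤ x ↔ b ≤ x)) :
      AdjunctRep C₀ (s ∪ c) (l ++ [(c, a, b)])

/-- Key invariant for adjuncts of chains: (A) every adjunct pair element has two
witnesses realizing it as a meet / join within `s`, in the strong sense of being
a greatest lower / least upper bound over `s`; (B) any two incomparable elements
of `s` have their bounds over `s` given by adjunct pair elements. -/
lemma adjunct_inv {α : Type*} [Lattice α] {C₀ s : Set α}
    {l : List (Set α × α × α)} (h : AdjunctRep C₀ s l) :
    (∀ t ∈ l, t.2.1 ∈ s ∧ t.2.2 ∈ s ∧ ∃ y ∈ s, ∃ z ∈ s,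
      y ≠ t.2.1 ∧ z ≠ t.2.1 ∧ y ≠ t.2.2 ∧ z ≠ t.2.2 ∧
      (∀ w ∈ s, (w ≤ y ∧ w ≤ z ↔ w ≤ t.2.1)) ∧
      (∀ w ∈ s, (y ≤ w ∧ z ≤ w ↔ t.2.2 ≤ w))) ∧
    (∀ y ∈ s, ∀ z ∈ s, y ≤ z ∨ z ≤ y ∨
      ((∃ t ∈ l, t.2.2 ∈ s ∧ ∀ w ∈ s, (y ≤ w ∧ z ≤ w ↔ t.2.2 ≤ w)) ∧
       (∃ t ∈ l, t.2.1 ∈ s ∧ ∀ w ∈ s, (w ≤ y ∧ w ≤ z ↔ w ≤ t.2.1)))) := by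
  induction h with
  | base hchain hne =>
      refine ⟨by simp, fun y hy z hz => ?_⟩
      rcases eq_or_ne y z with rfl | hne'
      · exact Or.inl le_rfl
      · rcases hchain hy hz hne' with h | h
        · exact Or.inl h
        · exact Or.inr (Or.inl h)
  | @step s l c a b hs hc hcne hdisj ha hb hab hnotcov hord ih =>
      obtain ⟨ihA, ihB⟩ := ih
      obtain ⟨z0, hz0s, haz0, hz0b⟩ := hnotcov
      obtain ⟨y0, hy0c⟩ := hcne
      have f1 : ∀ x ∈ s, ∀ w ∈ c, (x ≤ w ↔ x ≤ a) := fun x hx w hw => (hord x hx w hw).1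
      have f2 : ∀ x ∈ s, ∀ w ∈ c, (w ≤ x ↔ b ≤ x) := fun x hx w hw => (hord x hx w hw).2
      have hba : ¬ b ≤ a := hab.not_ge
      have hnotc : ∀ x ∈ s, x ∉ c := fun x hx => Set.disjoint_left.mp hdisj hx
      -- the mixed case of part (B)
      have mixed : ∀ y ∈ s, ∀ z ∈ c, y ≤ z ∨ z ≤ y ∨
          ((∃ t ∈ l ++ [(c, a, b)], t.2.2 ∈ s ∪ c ∧
            ∀ w ∈ s ∪ c, (y ≤ w ∧ z ≤ w ↔ t.2.2 ≤ w)) ∧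
           (∃ t ∈ l ++ [(c, a, b)], t.2.1 ∈ s ∪ c ∧
            ∀ w ∈ s ∪ c, (w ≤ y ∧ w ≤ z ↔ w ≤ t.2.1))) := by
        intro y hy z hz
        by_cases hyz : y ≤ z
        · exact Or.inl hyz
        by_cases hzy : z ≤ y
        · exact Or.inr (Or.inl hzy)
        have hya : ¬ y ≤ a := fun h => hyz ((f1 y hy z hz).mpr h)
        have hby : ¬ b ≤ y := fun h => hzy ((f2 y hy z hz).mpr h)
        refine Or.inr (Or.inr ⟨?_, ?_⟩)
        · by_cases hyb : y ≤ b
          · refine ⟨(c, a, b), by simp, Or.inl hb, ?_⟩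
            rintro w (hw | hw)
            · rw [show ((c, a, b) : Set α × α × α).2.2 = b from rfl, f2 w hw z hz]
              exact ⟨fun h => h.2, fun h => ⟨hyb.trans h, h⟩⟩
            · constructor
              · rintro ⟨h1, -⟩
                exact absurd ((f1 y hy w hw).mp h1) hya
              · intro h
                exact absurd ((f1 b hb w hw).mp h) hba
          · rcases ihB y hy b hb with h | h | ⟨⟨t, ht, hts, Pj⟩, -⟩
            · exact absurd h hyb
            · exact absurd h hby
            have hta : ¬ t.2.2 ≤ a := fun h =>
              hya (((Pj t.2.2 hts).mpr le_rfl).1.trans h)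
            refine ⟨t, List.mem_append_left _ ht, Or.inl hts, ?_⟩
            rintro w (hw | hw)
            · rw [f2 w hw z hz]
              exact Pj w hw
            · constructor
              · rintro ⟨h1, -⟩
                exact absurd ((f1 y hy w hw).mp h1) hya
              · intro h
                exact absurd ((f1 t.2.2 hts w hw).mp h) hta
        · by_cases hay : a ≤ y
          · refine ⟨(c, a, b), by simp, Or.inl ha, ?_⟩
            rintro w (hw | hw)
            · rw [show ((c, a, b) : Set α × α × α).2.1 = a from rfl, f1 w hw z hz]
              exact ⟨fun h => h.2, fun h => ⟨h.trans hay, h⟩⟩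
            · constructor
              · rintro ⟨h1, -⟩
                exact absurd ((f2 y hy w hw).mp h1) hby
              · intro h
                exact absurd ((f2 a ha w hw).mp h) hba
          · rcases ihB y hy a ha with h | h | ⟨-, ⟨t, ht, hts, Pm⟩⟩
            · exact absurd h hya
            · exact absurd h hay
            have htb : ¬ b ≤ t.2.1 := fun h =>
              hba (h.trans ((Pm t.2.1 hts).mpr le_rfl).2)
            refine ⟨t, List.mem_append_left _ ht, Or.inl hts, ?_⟩
            rintro w (hw | hw)
            · rw [f1 w hw z hz]
              exact Pm w hw
            · constructor
              · rintro ⟨h1, -⟩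
                exact absurd ((f2 y hy w hw).mp h1) hby
              · intro h
                exact absurd ((f2 t.2.1 hts w hw).mp h) htb
      constructor
      · -- part (A)
        intro t ht
        rw [List.mem_append, List.mem_singleton] at ht
        rcases ht with ht | rfl
        · obtain ⟨ht1, ht2, y, hy, z, hz, n1, n2, n3, n4, Pm, Pj⟩ := ihA t ht
          refine ⟨Or.inl ht1, Or.inl ht2, y, Or.inl hy, z, Or.inl hz, n1, n2, n3, n4,
            ?_, ?_⟩
          · rintro w (hw | hw)
            · exact Pm w hw
            · rw [f2 y hy w hw, f2 z hz w hw, f2 t.2.1 ht1 w hw]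
              exact Pm b hb
          · rintro w (hw | hw)
            · exact Pj w hw
            · rw [f1 y hy w hw, f1 z hz w hw, f1 t.2.2 ht2 w hw]
              exact Pj a ha
        · refine ⟨Or.inl ha, Or.inl hb, z0, Or.inl hz0s, y0, Or.inr hy0c,
            haz0.ne', fun e => hnotc a ha ((show y0 = a from e) ▸ hy0c), hz0b.ne,
            fun e => hnotc b hb ((show y0 = b from e) ▸ hy0c), ?_, ?_⟩
          · rintro w (hw | hw)
            · rw [show ((c, a, b) : Set α × α × α).2.1 = a from rfl, f1 w hw y0 hy0c]
              exact ⟨fun h => h.2, fun h => ⟨h.trans haz0.le, h⟩⟩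
            · constructor
              · rintro ⟨h1, -⟩
                exact absurd ((f2 z0 hz0s w hw).mp h1) hz0b.not_ge
              · intro h
                exact absurd ((f2 a ha w hw).mp h) hba
          · rintro w (hw | hw)
            · rw [show ((c, a, b) : Set α × α × α).2.2 = b from rfl, f2 w hw y0 hy0c]
              exact ⟨fun h => h.2, fun h => ⟨hz0b.le.trans h, h⟩⟩
            · constructor
              · rintro ⟨h1, -⟩
                exact absurd ((f1 z0 hz0s w hw).mp h1) haz0.not_ge
              · intro h
                exact absurd ((f1 b hb w hw).mp h) hba
      · -- part (B)
        rintro y (hy | hy) z (hz | hz)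
        · rcases ihB y hy z hz with h | h | ⟨⟨t, ht, hts, Pj⟩, ⟨t', ht', hts', Pm⟩⟩
          · exact Or.inl h
          · exact Or.inr (Or.inl h)
          · refine Or.inr (Or.inr ⟨⟨t, List.mem_append_left _ ht, Or.inl hts, ?_⟩,
              ⟨t', List.mem_append_left _ ht', Or.inl hts', ?_⟩⟩)
            · rintro w (hw | hw)
              · exact Pj w hw
              · rw [f1 y hy w hw, f1 z hz w hw, f1 t.2.2 hts w hw]
                exact Pj a ha
            · rintro w (hw | hw)
              · exact Pm w hw
              · rw [f2 y hy w hw, f2 z hz w hw, f2 t'.2.1 hts' w hw]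
                exact Pm b hb
        · exact mixed y hy z hz
        · rcases mixed z hz y hy with h | h | ⟨⟨t, ht, hts, Pj⟩, ⟨t', ht', hts', Pm⟩⟩
          · exact Or.inr (Or.inl h)
          · exact Or.inl h
          · exact Or.inr (Or.inr ⟨⟨t, ht, hts,
              fun w hw => and_comm.trans (Pj w hw)⟩,
              ⟨t', ht', hts', fun w hw => and_comm.trans (Pm w hw)⟩⟩)
        · rcases eq_or_ne y z with rfl | hne'
          · exact Or.inl le_rfl
          · rcases hc hy hz hne' with h | h
            · exact Or.inl h
            · exact Or.inr (Or.inl h)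

/-- If `L = C₀ ]^{b₁}_{a₁} C₁ ⋯ ]^{b_k}_{a_k} C_k` is an adjunct of `k + 1` chains
(`k ≥ 1`), then the reducible elements of `L` are exactly the elements of the adjunct
pairs: `Red(L) = {a₁, b₁, …, a_k, b_k}`. -/
theorem stmt9 {α : Type*} [Lattice α] [Fintype α] (k : ℕ) (hk : 1 ≤ k)
    (C₀ : Set α) (l : List (Set α × α × α)) (hlen : l.length = k)
    (hrep : AdjunctRep C₀ Set.univ l) :
    RedSet α = {x | ∃ t ∈ l, t.2.1 = x ∨ t.2.2 = x} := by
  obtain ⟨invA, invB⟩ := adjunct_inv hrep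
  ext x
  simp only [RedSet, Reducible, JoinReducible, MeetReducible, Set.mem_setOf_eq]
  constructor
  · rintro (⟨y, z, hy, hz, rfl⟩ | ⟨y, z, hy, hz, rfl⟩)
    · rcases invB y (Set.mem_univ y) z (Set.mem_univ z) with h | h | ⟨⟨t, ht, -, Pj⟩, -⟩
      · exact absurd (sup_eq_right.mpr h).symm hz
      · exact absurd (sup_eq_left.mpr h).symm hy
      · refine ⟨t, ht, Or.inr ?_⟩
        have h1 : t.2.2 ≤ y ⊔ z :=
          (Pj (y ⊔ z) (Set.mem_univ _)).mp ⟨le_sup_left, le_sup_right⟩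
        have h2 := (Pj t.2.2 (Set.mem_univ _)).mpr le_rfl
        exact le_antisymm h1 (sup_le h2.1 h2.2)
    · rcases invB y (Set.mem_univ y) z (Set.mem_univ z) with h | h | ⟨-, ⟨t, ht, -, Pm⟩⟩
      · exact absurd (inf_eq_left.mpr h).symm hy
      · exact absurd (inf_eq_right.mpr h).symm hz
      · refine ⟨t, ht, Or.inl ?_⟩
        have h1 : y ⊓ z ≤ t.2.1 :=
          (Pm (y ⊓ z) (Set.mem_univ _)).mp ⟨inf_le_left, inf_le_right⟩
        have h2 := (Pm t.2.1 (Set.mem_univ _)).mpr le_rfl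
        exact le_antisymm (le_inf h2.1 h2.2) h1
  · rintro ⟨t, ht, rfl | rfl⟩
    · obtain ⟨-, -, y, -, z, -, n1, n2, -, -, Pm, -⟩ := invA t ht
      refine Or.inr ⟨y, z, n1, n2, ?_⟩
      have h1 : y ⊓ z ≤ t.2.1 :=
        (Pm (y ⊓ z) (Set.mem_univ _)).mp ⟨inf_le_left, inf_le_right⟩
      have h2 := (Pm t.2.1 (Set.mem_univ _)).mpr le_rfl
      exact le_antisymm h1 (le_inf h2.1 h2.2)
    · obtain ⟨-, -, y, -, z, -, -, -, n3, n4, -, Pj⟩ := invA t ht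
      refine Or.inl ⟨y, z, n3, n4, ?_⟩
      have h1 : t.2.2 ≤ y ⊔ z :=
        (Pj (y ⊔ z) (Set.mem_univ _)).mp ⟨le_sup_left, le_sup_right⟩
      have h2 := (Pj t.2.2 (Set.mem_univ _)).mpr le_rfl
      exact le_antisymm (sup_le h2.1 h2.2) h1
end

section
/- A finite lattice has nullity 0 if and only if it is a chain. -/
/-- The cover graph of a poset: vertices are the elements, edges are covering pairs. -/
def coverGraph (α : Type*) [PartialOrder α] : SimpleGraph α where
  Adj x y := x ⋖ y ∨ y ⋖ x
  symm := ⟨fun _ _ h => h.symm⟩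
  loopless := ⟨fun x h => by rcases h with h | h <;> exact h.lt.false⟩

/-- The nullity of a (finite) poset: `m - n + c` where `m` is the number of edges,
`n` the number of vertices and `c` the number of connected components of the cover graph. -/
noncomputable def nullity (α : Type*) [PartialOrder α] : ℤ :=
  (Nat.card (coverGraph α).edgeSet : ℤ) - (Nat.card α : ℤ)
    + (Nat.card (coverGraph α).ConnectedComponent : ℤ)

/-!
A finite lattice has a least element `⊥`, and every `x ≠ ⊥` has a lower cover, so the cover
graph is connected and sending a covering pair `a ⋖ c` to its top `c` maps the edges onto the
elements other than `⊥`. Hence the nullity is `#edges - (n - 1) ≥ 0`, with equality exactly when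
every element has a unique lower cover. In a chain that is clear; conversely, if `x` and `y` are
incomparable, then `x ⊔ y` has a lower cover above `x` and one above `y`, and these cannot
coincide since their join would be `x ⊔ y`.
-/

open SimpleGraph

section PartialOrder

variable {α : Type*} [PartialOrder α]

theorem card_edgeSet_coverGraph :
    Nat.card (coverGraph α).edgeSet = Nat.card {p : α × α // p.1 ⋖ p.2} := by
  let toEdge : {p : α × α // p.1 ⋖ p.2} → (coverGraph α).edgeSet :=
    fun p => ⟨s(p.1.1, p.1.2), Or.inl p.2⟩
  refine (Nat.card_eq_of_bijective toEdge ⟨?_, ?_⟩).symm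
  · rintro ⟨⟨a, b⟩, hab⟩ ⟨⟨c, d⟩, hcd⟩ h
    rcases Sym2.eq_iff.1 (congrArg Subtype.val h) with ⟨rfl, rfl⟩ | ⟨rfl, rfl⟩
    · rfl
    · exact (hab.lt.asymm hcd.lt).elim
  · rintro ⟨e, he⟩
    induction e using Sym2.ind with
    | _ a b =>
      rcases he with hab | hba
      · exact ⟨⟨(a, b), hab⟩, rfl⟩
      · exact ⟨⟨(b, a), hba⟩, Subtype.ext Sym2.eq_swap⟩

theorem covBy_left_unique_of_total (htotal : ∀ x y : α, x ≤ y ∨ y ≤ x) {a b c : α}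
    (hac : a ⋖ c) (hbc : b ⋖ c) : a = b := by
  rcases htotal a b with hab | hba
  · exact hab.eq_or_lt.resolve_right fun hab => hac.2 hab hbc.lt
  · exact (hba.eq_or_lt.resolve_right fun hba => hbc.2 hba hac.lt).symm

variable [OrderBot α] [Finite α]

theorem coverGraph_reachable_bot (x : α) : (coverGraph α).Reachable ⊥ x := by
  induction x using WellFoundedLT.induction with
  | ind x ih =>
    rcases eq_or_ne x ⊥ with rfl | hx
    · rfl
    · obtain ⟨w, -, hwx⟩ := exists_le_covBy_of_lt (bot_lt_iff_ne_bot.2 hx)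
      exact (ih w hwx.lt).trans (Adj.reachable (Or.inl hwx))

theorem card_connectedComponent_coverGraph :
    Nat.card (coverGraph α).ConnectedComponent = 1 :=
  Nat.card_eq_one_iff_unique.2
    ⟨Preconnected.subsingleton_connectedComponent fun x y =>
        (coverGraph_reachable_bot x).symm.trans (coverGraph_reachable_bot y),
      ⟨(coverGraph α).connectedComponentMk ⊥⟩⟩

theorem nullity_eq_card_covBy_sub_card_ne_bot :
    nullity α = Nat.card {p : α × α // p.1 ⋖ p.2} - Nat.card {x : α // x ≠ ⊥} := by
  classical
  have hcard : Nat.card α = Nat.card {x : α // x ≠ ⊥} + 1 := by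
    rw [← Nat.card_congr (Equiv.optionSubtypeNe (⊥ : α)), Finite.card_option]
  rw [nullity, card_edgeSet_coverGraph, card_connectedComponent_coverGraph, hcard]
  push_cast
  ring

def covByTop (p : {p : α × α // p.1 ⋖ p.2}) : {x : α // x ≠ ⊥} :=
  ⟨p.1.2, ne_bot_of_gt p.2.lt⟩

theorem covByTop_surjective : Function.Surjective (covByTop (α := α)) := by
  rintro ⟨x, hx⟩
  obtain ⟨w, -, hwx⟩ := exists_le_covBy_of_lt (bot_lt_iff_ne_bot.2 hx)
  exact ⟨⟨(w, x), hwx⟩, rfl⟩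

theorem card_covBy_eq_card_ne_bot_iff :
    Nat.card {p : α × α // p.1 ⋖ p.2} = Nat.card {x : α // x ≠ ⊥} ↔
      ∀ a b c : α, a ⋖ c → b ⋖ c → a = b := by
  refine (and_iff_right (covByTop_surjective (α := α))).symm.trans ?_
  rw [← Nat.bijective_iff_surjective_and_card]
  constructor
  · intro hbij a b c hac hbc
    have h := hbij.1 (a₁ := ⟨(a, c), hac⟩) (a₂ := ⟨(b, c), hbc⟩) rfl
    exact congrArg (fun p => p.1.1) h
  · refine fun hunique => ⟨?_, covByTop_surjective⟩
    rintro ⟨⟨a, c⟩, hac⟩ ⟨⟨b, d⟩, hbd⟩ h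
    obtain rfl : c = d := congrArg Subtype.val h
    obtain rfl := hunique a b c hac hbd
    rfl

end PartialOrder

theorem covBy_left_unique_iff_total {α : Type*} [Lattice α] [Finite α] :
    (∀ a b c : α, a ⋖ c → b ⋖ c → a = b) ↔ ∀ x y : α, x ≤ y ∨ y ≤ x := by
  refine ⟨fun hunique x y => ?_, fun htotal a b c => covBy_left_unique_of_total htotal⟩
  by_contra! ⟨hxy, hyx⟩
  obtain ⟨u, hxu, hu⟩ := exists_le_covBy_of_lt (left_lt_sup.2 hyx)
  obtain ⟨v, hyv, hv⟩ := exists_le_covBy_of_lt (right_lt_sup.2 hxy)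
  obtain rfl := hunique u v _ hu hv
  exact hu.lt.not_ge (sup_le hxu hyv)

/-- A finite lattice has nullity `0` if and only if it is a chain. -/
theorem stmt10 {α : Type*} [Lattice α] [Fintype α] [Nonempty α] :
    nullity α = 0 ↔ ∀ x y : α, x ≤ y ∨ y ≤ x := by
  let : OrderBot α := Fintype.toOrderBot α
  rw [nullity_eq_card_covBy_sub_card_ne_bot, sub_eq_zero, Nat.cast_inj,
    card_covBy_eq_card_ne_bot_iff, covBy_left_unique_iff_total]
end

section
/- Every finite dismantlable lattice of nullity k ≥ 1 has at least k + 3 elements. -/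
/-- A subset of a lattice closed under meets and joins (a sublattice). -/
def IsSublatticeSet {α : Type*} [Lattice α] (s : Set α) : Prop :=
  ∀ x ∈ s, ∀ y ∈ s, x ⊓ y ∈ s ∧ x ⊔ y ∈ s

/-- A finite lattice of order `n` is dismantlable if there is a chain
`L₁ ⊂ L₂ ⊂ ⋯ ⊂ Lₙ = L` of sublattices with `|Lᵢ| = i`. -/
def Dismantlable (α : Type*) [Lattice α] [Fintype α] : Prop :=
  ∃ f : ℕ → Set α,
    (∀ i, 1 ≤ i → i ≤ Fintype.card α → (f i).ncard = i ∧ IsSublatticeSet (f i)) ∧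
    (∀ i, 1 ≤ i → i < Fintype.card α → f i ⊆ f (i + 1)) ∧
    f (Fintype.card α) = Set.univ

/-!
If `{x}ᶜ` is a sublattice, then `x` has at most one lower and one upper cover (two distinct lower
covers would join to `x`), and covers inside `{x}ᶜ` remain covers in the sublattice; so deleting `x`
loses at most two edges of the cover graph. Peeling off a dismantling chain down to a 3-element
lattice, whose triangle-free cover graph has at most two edges, gives `m ≤ 2n - 4` for `n ≥ 3`.
The cover graph of a lattice is connected (everything is reachable from `x ⊓ y`), so the nullity
is `m - n + 1 ≤ n - 3`; lattices with at most two elements have nullity `0`.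
-/

open SimpleGraph Finset

section CoverGraph

variable {α : Type*}

lemma coverGraph_cliqueFree_three [PartialOrder α] : (coverGraph α).CliqueFree 3 := by
  classical
  intro s hs
  obtain ⟨a, b, c, hab, hac, hbc, -⟩ := is3Clique_iff.mp hs
  -- each orientation is either a cyclic chain or puts one vertex strictly inside a cover
  rcases hab with hab | hab <;> rcases hac with hac | hac <;> rcases hbc with hbc | hbc
  all_goals first
    | exact hac.2 hab.lt hbc.lt
    | exact hab.2 hac.lt hbc.lt
    | exact hbc.2 hac.lt hab.lt
    | exact hbc.2 hab.lt hac.lt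
    | exact hab.2 hbc.lt hac.lt
    | exact hac.2 hbc.lt hab.lt
    | exact (hac.lt.trans (hab.lt.trans hbc.lt)).false
    | exact (hac.lt.trans (hbc.lt.trans hab.lt)).false

lemma card_edgeSet_coverGraph_le_two_of_card_eq_three [PartialOrder α] [Fintype α]
    (h : Fintype.card α = 3) :
    Nat.card (coverGraph α).edgeSet ≤ 2 := by
  classical
  have := (coverGraph_cliqueFree_three (α := α)).card_edgeFinset_le (r := 2)
  rw [Nat.card_eq_fintype_card, ← edgeFinset_card]
  simpa [h] using this

lemma card_edgeSet_coverGraph_le_choose_two [PartialOrder α] [Fintype α] :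
    Nat.card (coverGraph α).edgeSet ≤ (Fintype.card α).choose 2 := by
  classical
  rw [Nat.card_eq_fintype_card, ← edgeFinset_card]
  exact card_edgeFinset_le_card_choose_two

lemma coverGraph_reachable_of_le [PartialOrder α] [LocallyFiniteOrder α] {x y : α} (h : x ≤ y) :
    (coverGraph α).Reachable x y := by
  rw [reachable_iff_reflTransGen]
  exact Relation.ReflTransGen.mono (fun _ _ h => Or.inl h) _ _ (le_iff_reflTransGen_covBy.mp h)

lemma coverGraph_connected [Lattice α] [LocallyFiniteOrder α] [Nonempty α] :
    (coverGraph α).Connected :=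
  .mk fun x y =>
    (coverGraph_reachable_of_le (inf_le_left : x ⊓ y ≤ x)).symm.trans
      (coverGraph_reachable_of_le inf_le_right)

lemma nullity_eq_card_edgeSet_sub_card_add_one [Lattice α] [Fintype α] [Nonempty α] :
    nullity α = (Nat.card (coverGraph α).edgeSet : ℤ) - Fintype.card α + 1 := by
  classical
  let := Fintype.toLocallyFiniteOrder (α := α)
  have := (coverGraph_connected (α := α)).preconnected.subsingleton_connectedComponent
  rw [nullity, Nat.card_of_subsingleton (connectedComponentMk _ (Classical.arbitrary α)),
    Nat.card_eq_fintype_card (α := α), Nat.cast_one]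

end CoverGraph

namespace IsSublatticeSet

variable {α : Type*} [Lattice α]

def toSublattice {s : Set α} (hs : IsSublatticeSet s) : Sublattice α where
  carrier := s
  supClosed' _ ha _ hb := (hs _ ha _ hb).2
  infClosed' _ ha _ hb := (hs _ ha _ hb).1

variable {x : α}

lemma lowerCover_unique {a b : α} (hx : IsSublatticeSet {x}ᶜ) (ha : a ⋖ x) (hb : b ⋖ x) :
    a = b := by
  have hsup : a ⊔ b ≠ x := (hx a ha.ne b hb.ne).2
  have hle : a ⊔ b ≤ x := sup_le ha.le hb.le
  calc a = a ⊔ b := ((ha.eq_or_eq le_sup_left hle).resolve_right hsup).symm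
    _ = b := (hb.eq_or_eq le_sup_right hle).resolve_right hsup

lemma upperCover_unique {a b : α} (hx : IsSublatticeSet {x}ᶜ) (ha : x ⋖ a) (hb : x ⋖ b) :
    a = b := by
  have hinf : a ⊓ b ≠ x := (hx a ha.ne' b hb.ne').1
  have hle : x ≤ a ⊓ b := le_inf ha.le hb.le
  calc a = a ⊓ b := ((ha.eq_or_eq hle inf_le_left).resolve_left hinf).symm
    _ = b := (hb.eq_or_eq hle inf_le_right).resolve_left hinf

lemma degree_coverGraph_le_two [Fintype α] [DecidableRel (coverGraph α).Adj]
    (hx : IsSublatticeSet {x}ᶜ) :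
    (coverGraph α).degree x ≤ 2 := by
  classical
  have hsub : (coverGraph α).neighborFinset x ⊆
      univ.filter (· ⋖ x) ∪ univ.filter (x ⋖ ·) := by
    intro y hy
    rcases (mem_neighborFinset _ _ _).mp hy with h | h <;> simp [h]
  calc (coverGraph α).degree x = #((coverGraph α).neighborFinset x) :=
        (card_neighborFinset_eq_degree _ _).symm
    _ ≤ #(univ.filter (· ⋖ x)) + #(univ.filter (x ⋖ ·)) :=
        (card_le_card hsub).trans (card_union_le _ _)
    _ ≤ 1 + 1 := by
      gcongr <;> refine card_le_one.mpr fun a ha b hb => ?_ <;> simp only [mem_filter] at ha hb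
      · exact hx.lowerCover_unique ha.2 hb.2
      · exact hx.upperCover_unique ha.2 hb.2

lemma card_edgeSet_coverGraph_le [Fintype α] (hx : IsSublatticeSet {x}ᶜ) :
    Nat.card (coverGraph α).edgeSet ≤ Nat.card (coverGraph hx.toSublattice).edgeSet + 2 := by
  classical
  have hinduce : (coverGraph α).induce {x}ᶜ ≤ coverGraph hx.toSublattice :=
    fun a b (h : (a : α) ⋖ b ∨ (b : α) ⋖ a) =>
      h.imp (CovBy.of_image (OrderEmbedding.subtype _)) (CovBy.of_image (OrderEmbedding.subtype _))
  have hdelete := card_edgeFinset_deleteIncidenceSet (coverGraph α) x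
  rw [← card_edgeFinset_induce_compl_singleton] at hdelete
  have hmono : Nat.card ((coverGraph α).induce {x}ᶜ).edgeSet ≤
      Nat.card (coverGraph hx.toSublattice).edgeSet :=
    Nat.card_mono (Set.toFinite _) (edgeSet_mono hinduce)
  have hdeg := hx.degree_coverGraph_le_two
  simp only [Nat.card_eq_fintype_card, ← edgeFinset_card] at hmono ⊢
  omega

end IsSublatticeSet

namespace Dismantlable

variable {α : Type*} [Lattice α] [Fintype α]

lemma exists_dismantlable_compl_singleton (hd : Dismantlable α) (h2 : 2 ≤ Fintype.card α) :
    ∃ (x : α) (hx : IsSublatticeSet {x}ᶜ), ∀ [Fintype hx.toSublattice],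
      Fintype.card hx.toSublattice + 1 = Fintype.card α ∧ Dismantlable hx.toSublattice := by
  obtain ⟨f, hf, hchain, -⟩ := hd
  set n := Fintype.card α
  obtain ⟨hcard, hlat⟩ := hf (n - 1) (by omega) (by omega)
  have hmono : MonotoneOn f (Set.Icc 1 n) :=
    monotoneOn_of_le_succ Set.ordConnected_Icc fun a _ ha hsa =>
      hchain a ha.1 (by simp only [Order.succ_eq_add_one, Set.mem_Icc] at hsa; omega)
  obtain ⟨x, hx⟩ : ∃ x, (f (n - 1))ᶜ = {x} := by
    refine Set.ncard_eq_one.mp ?_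
    have := Set.ncard_add_ncard_compl (f (n - 1))
    rw [Nat.card_eq_fintype_card] at this
    omega
  rw [← compl_compl (f (n - 1)), hx] at hcard hlat
  refine ⟨x, hlat, fun {_} => ?_⟩
  have hcardS : Fintype.card hlat.toSublattice = n - 1 := by
    rw [← Nat.card_eq_fintype_card, ← hcard]
    exact Nat.card_coe_set_eq _
  refine ⟨by omega, fun i => Subtype.val ⁻¹' f i, fun i hi hin => ?_, fun i hi hin => ?_, ?_⟩
  · rw [hcardS] at hin
    have hsub : f i ⊆ {x}ᶜ := by
      rw [← hx, compl_compl]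
      exact hmono ⟨hi, by omega⟩ ⟨by omega, by omega⟩ hin
    obtain ⟨hcardi, hlati⟩ := hf i hi (by omega)
    refine ⟨(Set.ncard_preimage_of_injective_subset_range Subtype.val_injective ?_).trans hcardi,
      fun u hu v hv => hlati u hu v hv⟩
    rwa [Subtype.range_coe_subtype]
  · exact fun u hu => hchain i hi (by omega) hu
  · change Subtype.val ⁻¹' f (Fintype.card hlat.toSublattice) = _
    rw [hcardS, ← compl_compl (f (n - 1)), hx]
    exact Subtype.coe_preimage_self _

theorem card_edgeSet_coverGraph_add_four_le (hd : Dismantlable α) (h3 : 3 ≤ Fintype.card α) :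
    Nat.card (coverGraph α).edgeSet + 4 ≤ 2 * Fintype.card α := by
  obtain ⟨n, hn⟩ : ∃ n, Fintype.card α = n := ⟨_, rfl⟩
  rw [hn] at h3 ⊢
  induction n, h3 using Nat.le_induction generalizing α with
  | base => have := card_edgeSet_coverGraph_le_two_of_card_eq_three hn; omega
  | succ n h3 ih =>
    obtain ⟨x, hx, hS⟩ := hd.exists_dismantlable_compl_singleton (by omega)
    have := Fintype.ofFinite hx.toSublattice
    obtain ⟨hcardS, hdS⟩ := hS
    have := ih hdS (by omega)
    have := hx.card_edgeSet_coverGraph_le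
    omega

end Dismantlable

/-- Every finite dismantlable lattice of nullity `k ≥ 1` has at least `k + 3` elements. -/
theorem stmt11 {α : Type*} [Lattice α] [Fintype α] [Nonempty α]
    (hd : Dismantlable α) (k : ℕ) (hk : 1 ≤ k) (hnull : nullity α = (k : ℤ)) :
    k + 3 ≤ Fintype.card α := by
  rw [nullity_eq_card_edgeSet_sub_card_add_one] at hnull
  rcases le_or_gt 3 (Fintype.card α) with h3 | h2
  · have := hd.card_edgeSet_coverGraph_add_four_le h3
    omega
  · have hpos : 0 < Fintype.card α := Fintype.card_pos
    have := card_edgeSet_coverGraph_le_choose_two (α := α)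
    rw [Nat.choose_two_right] at this
    interval_cases Fintype.card α <;> omega
end

section
/- For every n ≥ 1, the number of isomorphism classes of RC-lattices on n elements satisfies |𝓛(n)| = 1 + Σ_{k=1}^{n−3} |𝓛(n,k)|, where 𝓛(n,k) denotes the isomorphism classes of RC-lattices on n elements having nullity k (for n ≤ 3 the sum is empty and |𝓛(n)| = 1). -/
/-- A block: a (finite) lattice whose greatest element is join-reducible and whose
least element is meet-reducible. -/
def IsBlock (α : Type*) [Lattice α] : Prop :=
  (∃ t : α, (∀ x, x ≤ t) ∧ JoinReducible t) ∧ (∃ b : α, (∀ x, b ≤ x) ∧ MeetReducible b)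

/-- The partial order underlying a lattice structure given as a term. -/
def latPO {n : ℕ} (L : Lattice (Fin n)) : PartialOrder (Fin n) :=
  @SemilatticeInf.toPartialOrder _ (@Lattice.toSemilatticeInf _ L)

/-- `L` is an RC-lattice structure: any two reducible elements are comparable. -/
def IsRCLat {n : ℕ} (L : Lattice (Fin n)) : Prop :=
  ∀ x y : Fin n, @Reducible _ L x → @Reducible _ L y →
    (latPO L).le x y ∨ (latPO L).le y x

/-- The number of isomorphism classes of lattice structures on `Fin n`
(i.e. of lattices with `n` elements) satisfying `P`. -/
noncomputable def numIsoClasses (n : ℕ) (P : Lattice (Fin n) → Prop) : ℕ :=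
  Nat.card (Quot fun (L₁ L₂ : {L : Lattice (Fin n) // P L}) =>
    ∃ e : Fin n ≃ Fin n, ∀ x y : Fin n,
      (latPO L₁.1).le x y ↔ (latPO L₂.1).le (e x) (e y))

/-- `𝓑(n,k)`: blocks on `n` elements of nullity `k` which are RC-lattices. -/
def BlockP (n k : ℕ) (L : Lattice (Fin n)) : Prop :=
  @IsBlock _ L ∧ @nullity (Fin n) (latPO L) = (k : ℤ) ∧ IsRCLat L

/-- `𝓑(n,k,r)`: members of `𝓑(n,k)` with exactly `r` reducible elements. -/
def BlockPr (n k r : ℕ) (L : Lattice (Fin n)) : Prop :=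
  BlockP n k L ∧ (@RedSet _ L).ncard = r

/-- `𝓛(n,k)`: RC-lattices on `n` elements of nullity `k`. -/
def RCLatP (n k : ℕ) (L : Lattice (Fin n)) : Prop :=
  IsRCLat L ∧ @nullity (Fin n) (latPO L) = (k : ℤ)

/-!
The cover graph of a finite lattice is connected (every element reaches `⊥` by descending
covers), so its nullity is `m - n + 1`, where `m` counts the covering pairs. A chain has
`m = n - 1`, hence nullity `0`, and any two chains on `n` elements are isomorphic. If `p, q` are
incomparable, `p ⊔ q` has two lower covers and deleting one of these edges keeps the graph
connected, so `m ≥ n`. In an RC-lattice the covering pairs inject into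
`{y | y ≠ ⊥} ⊕ {x | x irreducible, x ≠ ⊤}` (see `coverCode`); as the reducible elements together
with `⊤`, or dually with `⊥`, number at least three, or else are exactly `⊥` and `⊤`, this gives
`m ≤ 2n - 4`. So a non-chain RC-lattice has nullity in `[1, n - 3]`, and sorting isomorphism
classes by nullity gives the formula.
-/

open SimpleGraph OrderDual

section CoverGraph

variable {α β : Type*} [PartialOrder α] [PartialOrder β]

def coverPairs (α : Type*) [PartialOrder α] : Set (α × α) := {p | p.1 ⋖ p.2}

lemma card_edgeSet_coverGraph_s14 : Nat.card (coverGraph α).edgeSet = (coverPairs α).ncard := by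
  have himage : (coverGraph α).edgeSet = (fun p : α × α => s(p.1, p.2)) '' coverPairs α := by
    ext e
    induction e using Sym2.ind with
    | _ x y =>
      simp only [mem_edgeSet, coverGraph, Set.mem_image, coverPairs, Set.mem_ofPred_eq,
        Prod.exists, Sym2.eq_iff]
      constructor
      · rintro (h | h)
        · exact ⟨x, y, h, .inl ⟨rfl, rfl⟩⟩
        · exact ⟨y, x, h, .inr ⟨rfl, rfl⟩⟩
      · rintro ⟨a, b, h, ⟨rfl, rfl⟩ | ⟨rfl, rfl⟩⟩
        · exact .inl h
        · exact .inr h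
  rw [Nat.card_coe_set_eq, himage, Set.InjOn.ncard_image]
  rintro ⟨a, b⟩ hab ⟨c, d⟩ hcd h
  rcases Sym2.eq_iff.1 h with ⟨rfl, rfl⟩ | ⟨rfl, rfl⟩
  · rfl
  · exact absurd (hab : a ⋖ b).lt (hcd : b ⋖ a).lt.asymm

lemma ncard_coverPairs_orderDual : (coverPairs αᵒᵈ).ncard = (coverPairs α).ncard := by
  rw [← card_edgeSet_coverGraph_s14, ← card_edgeSet_coverGraph_s14]
  exact Nat.card_congr hasseDualIso.mapEdgeSet

lemma covBy_eq_of_le {x₁ x₂ y : α} (h₁ : x₁ ⋖ y) (h₂ : x₂ ⋖ y) (hle : x₁ ≤ x₂) : x₁ = x₂ :=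
  hle.eq_of_not_lt fun hlt => h₁.2 hlt h₂.lt

def coverGraphIso (e : α ≃o β) : coverGraph α ≃g coverGraph β :=
  ⟨e.toEquiv, by simp [coverGraph]⟩

lemma nullity_congr (e : α ≃o β) : nullity α = nullity β := by
  let φ := coverGraphIso e
  rw [nullity, nullity, Nat.card_congr φ.mapEdgeSet, Nat.card_congr e.toEquiv,
    Nat.card_congr φ.connectedComponentEquiv]

lemma connected_of_forall_exists_adj_lt [OrderBot α] [Finite α] (G : SimpleGraph α)
    (h : ∀ x, ⊥ < x → ∃ y < x, G.Adj y x) : G.Connected := by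
  refine (connected_iff_exists_forall_reachable G).2 ⟨⊥, fun x => ?_⟩
  induction x using WellFoundedLT.induction with
  | ind x ih =>
    rcases (bot_le : ⊥ ≤ x).eq_or_lt with rfl | hx
    · rfl
    · obtain ⟨y, hyx, hadj⟩ := h x hx
      exact (ih y hyx).trans hadj.reachable

lemma coverGraph_connected_s14 [OrderBot α] [Finite α] : (coverGraph α).Connected :=
  connected_of_forall_exists_adj_lt _ fun _ hx =>
    let ⟨c, _, hc⟩ := exists_le_covBy_of_lt hx
    ⟨c, hc.lt, .inl hc⟩

lemma nullity_eq_ncard_coverPairs [OrderBot α] [Finite α] :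
    nullity α = (coverPairs α).ncard - Nat.card α + 1 := by
  have := (coverGraph_connected_s14 (α := α)).preconnected.subsingleton_connectedComponent
  have : Nonempty (coverGraph α).ConnectedComponent := ⟨connectedComponentMk _ ⊥⟩
  rw [nullity, card_edgeSet_coverGraph_s14, Nat.card_of_subsingleton (connectedComponentMk _ ⊥)]
  push_cast
  ring

lemma card_le_ncard_coverPairs_add_one [OrderBot α] [Finite α] :
    Nat.card α ≤ (coverPairs α).ncard + 1 :=
  card_edgeSet_coverGraph_s14 (α := α) ▸ coverGraph_connected_s14.card_vert_le_card_edgeSet_add_one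

end CoverGraph

section Lattice

variable {α : Type*} [Lattice α]

lemma joinReducible_of_covBy {x₁ x₂ y : α} (h₁ : x₁ ⋖ y) (h₂ : x₂ ⋖ y) (hne : x₁ ≠ x₂) :
    JoinReducible y :=
  ⟨x₁, x₂, h₁.lt.ne, h₂.lt.ne, h₁.wcovBy.sup_eq h₂.wcovBy hne⟩

lemma meetReducible_of_covBy {x y₁ y₂ : α} (h₁ : x ⋖ y₁) (h₂ : x ⋖ y₂) (hne : y₁ ≠ y₂) :
    MeetReducible x :=
  ⟨y₁, y₂, h₁.lt.ne', h₂.lt.ne', h₁.wcovBy.inf_eq h₂.wcovBy hne⟩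

lemma joinReducible_sup {p q : α} (hpq : ¬ p ≤ q) (hqp : ¬ q ≤ p) : JoinReducible (p ⊔ q) :=
  ⟨p, q, (left_lt_sup.2 hqp).ne, (right_lt_sup.2 hpq).ne, rfl⟩

lemma meetReducible_inf {p q : α} (hpq : ¬ p ≤ q) (hqp : ¬ q ≤ p) : MeetReducible (p ⊓ q) :=
  ⟨p, q, (inf_lt_left.2 hpq).ne', (inf_lt_right.2 hqp).ne', rfl⟩

lemma reducible_toDual {x : α} : Reducible (toDual x) ↔ Reducible x := Or.comm

lemma isChain_redSet_orderDual (hRC : IsChain (· ≤ ·) (RedSet α)) :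
    IsChain (· ≤ ·) (RedSet αᵒᵈ) :=
  fun _ hx _ hy hxy =>
    (hRC (reducible_toDual.1 hx) (reducible_toDual.1 hy) (ofDual.injective.ne hxy)).symm

end Lattice

section RCBound

variable {α : Type*} [Lattice α]

open Classical in
noncomputable def coverCode (p : α × α) : α ⊕ α :=
  if Reducible p.1 ∨ ¬ JoinReducible p.2 then .inl p.2 else .inr p.1

lemma coverCode_injOn (hRC : IsChain (· ≤ ·) (RedSet α)) :
    Set.InjOn coverCode (coverPairs α) := by
  rintro ⟨x₁, y₁⟩ (h₁ : x₁ ⋖ y₁) ⟨x₂, y₂⟩ (h₂ : x₂ ⋖ y₂) heq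
  simp only [coverCode] at heq
  split_ifs at heq with hc₁ hc₂ hc₂
  · obtain rfl : y₁ = y₂ := Sum.inl.inj heq
    by_contra hne
    have hx : x₁ ≠ x₂ := fun h => hne (by rw [h])
    have hJ := joinReducible_of_covBy h₁ h₂ hx
    rcases hRC (hc₁.resolve_right (not_not.2 hJ)) (hc₂.resolve_right (not_not.2 hJ)) hx with
      h | h
    · exact hx (covBy_eq_of_le h₁ h₂ h)
    · exact hx (covBy_eq_of_le h₂ h₁ h).symm
  · obtain rfl : x₁ = x₂ := Sum.inr.inj heq
    by_contra hne
    have hy : y₁ ≠ y₂ := fun h => hne (by rw [h])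
    exact hc₁ (.inl (.inr (meetReducible_of_covBy h₁ h₂ hy)))

variable [Finite α]

lemma ncard_coverPairs_le_add (hRC : IsChain (· ≤ ·) (RedSet α)) {A B : Set α}
    (hA : ∀ x y, x ⋖ y → Reducible x ∨ ¬ JoinReducible y → y ∈ A)
    (hB : ∀ x y, x ⋖ y → ¬ Reducible x → JoinReducible y → x ∈ B) :
    (coverPairs α).ncard ≤ A.ncard + B.ncard := by
  have hmaps : Set.MapsTo coverCode (coverPairs α) (Sum.inl '' A ∪ Sum.inr '' B) := by
    rintro ⟨x, y⟩ (h : x ⋖ y)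
    unfold coverCode
    split_ifs with hc
    · exact .inl ⟨y, hA x y h hc, rfl⟩
    · push Not at hc
      exact .inr ⟨x, hB x y h hc.1 hc.2, rfl⟩
  calc (coverPairs α).ncard ≤ (Sum.inl '' A ∪ Sum.inr '' B).ncard :=
        Set.ncard_le_ncard_of_injOn _ hmaps (coverCode_injOn hRC)
    _ ≤ (Sum.inl '' A).ncard + (Sum.inr '' B).ncard := Set.ncard_union_le _ _
    _ = A.ncard + B.ncard := by
        rw [Sum.inl_injective.injOn.ncard_image, Sum.inr_injective.injOn.ncard_image]

variable [BoundedOrder α]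

lemma ncard_coverPairs_add_four_le_of_ne_top (hRC : IsChain (· ≤ ·) (RedSet α)) {r s : α}
    (hr : Reducible r) (hs : Reducible s) (hrs : r ≠ s) (hrt : r ≠ ⊤) (hst : s ≠ ⊤) :
    (coverPairs α).ncard + 4 ≤ 2 * Nat.card α := by
  have key := ncard_coverPairs_le_add (A := ({⊥}ᶜ : Set α)) (B := {⊤, r, s}ᶜ) hRC
    (fun x y h _ => (h.lt.trans_le' bot_le).ne')
    (fun x y h hx _ => by
      simp only [Set.mem_compl_iff, Set.mem_insert_iff, Set.mem_singleton_iff, not_or]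
      exact ⟨h.lt.ne_top, fun h => hx (h ▸ hr), fun h => hx (h ▸ hs)⟩)
  have h1 := Set.ncard_add_ncard_compl ({⊥} : Set α)
  have h3 := Set.ncard_add_ncard_compl ({⊤, r, s} : Set α)
  rw [Set.ncard_singleton] at h1
  rw [Set.ncard_eq_three.2 ⟨⊤, r, s, hrt.symm, hst.symm, hrs, rfl⟩] at h3
  omega

lemma ncard_coverPairs_add_four_le_of_ne_bot (hRC : IsChain (· ≤ ·) (RedSet α)) {r s : α}
    (hr : Reducible r) (hs : Reducible s) (hrs : r ≠ s) (hrb : r ≠ ⊥) (hsb : s ≠ ⊥) :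
    (coverPairs α).ncard + 4 ≤ 2 * Nat.card α := by
  have := ncard_coverPairs_add_four_le_of_ne_top (α := αᵒᵈ) (isChain_redSet_orderDual hRC)
    (reducible_toDual.2 hr) (reducible_toDual.2 hs) hrs hrb hsb
  rwa [ncard_coverPairs_orderDual, Nat.card_congr ofDual] at this

lemma ncard_coverPairs_add_four_le_of_redSet (hRC : IsChain (· ≤ ·) (RedSet α))
    (hRed : ∀ x : α, Reducible x → x = ⊥ ∨ x = ⊤) (hbot : Reducible (⊥ : α))
    (htop : JoinReducible (⊤ : α)) (hcov : ¬ (⊥ : α) ⋖ ⊤) :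
    (coverPairs α).ncard + 4 ≤ 2 * Nat.card α := by
  have : Nontrivial α := let ⟨y, _, hy, _⟩ := htop; ⟨y, ⊤, hy⟩
  have key := ncard_coverPairs_le_add (A := ({⊥, ⊤}ᶜ : Set α)) (B := {⊥, ⊤}ᶜ) hRC
    (fun x y h hc => by
      simp only [Set.mem_compl_iff, Set.mem_insert_iff, Set.mem_singleton_iff, not_or]
      refine ⟨(h.lt.trans_le' bot_le).ne', ?_⟩
      rintro rfl
      rcases hRed x (hc.resolve_right (not_not.2 htop)) with rfl | rfl
      · exact hcov h
      · exact h.lt.ne rfl)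
    (fun x y h hx _ => by
      simp only [Set.mem_compl_iff, Set.mem_insert_iff, Set.mem_singleton_iff, not_or]
      exact ⟨fun h => hx (h ▸ hbot), h.lt.ne_top⟩)
  have h1 := Set.ncard_add_ncard_compl ({⊥, ⊤} : Set α)
  rw [Set.ncard_pair bot_ne_top] at h1
  omega

lemma ncard_coverPairs_add_four_le (hRC : IsChain (· ≤ ·) (RedSet α)) {p q : α}
    (hpq : ¬ p ≤ q) (hqp : ¬ q ≤ p) :
    (coverPairs α).ncard + 4 ≤ 2 * Nat.card α := by
  have hu : Reducible (p ⊓ q) := .inr (meetReducible_inf hpq hqp)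
  have hv : Reducible (p ⊔ q) := .inl (joinReducible_sup hpq hqp)
  have hup : p ⊓ q < p := inf_lt_left.2 hpq
  have hpv : p < p ⊔ q := left_lt_sup.2 hqp
  have huv : p ⊓ q ≠ p ⊔ q := (hup.trans hpv).ne
  have hut : p ⊓ q ≠ ⊤ := (hup.trans_le le_top).ne
  have hvb : p ⊔ q ≠ ⊥ := (hpv.trans_le' bot_le).ne'
  by_cases h : ∃ r : α, Reducible r ∧ r ≠ ⊥ ∧ r ≠ ⊤
  · obtain ⟨r, hr, hrb, hrt⟩ := h
    rcases eq_or_ne r (p ⊓ q) with rfl | hru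
    · exact ncard_coverPairs_add_four_le_of_ne_bot hRC hr hv huv hrb hvb
    · exact ncard_coverPairs_add_four_le_of_ne_top hRC hr hu hru hrt hut
  · push Not at h
    have hRed : ∀ x : α, Reducible x → x = ⊥ ∨ x = ⊤ := fun x hx => or_iff_not_imp_left.2 (h x hx)
    have hub : p ⊓ q = ⊥ := (hRed _ hu).resolve_right hut
    have hvt : p ⊔ q = ⊤ := (hRed _ hv).resolve_left hvb
    refine ncard_coverPairs_add_four_le_of_redSet hRC hRed (hub ▸ hu)
      (hvt ▸ joinReducible_sup hpq hqp) fun hcov => ?_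
    rw [← hub, ← hvt] at hcov
    exact hcov.2 hup hpv

end RCBound

section NullityBounds

variable {α : Type*} [Lattice α] [Finite α]

lemma nullity_eq_zero_of_total [OrderBot α] (htot : ∀ x y : α, x ≤ y ∨ y ≤ x) :
    nullity α = 0 := by
  have hle : (coverPairs α).ncard ≤ ({⊥}ᶜ : Set α).ncard := by
    refine Set.ncard_le_ncard_of_injOn Prod.snd
      (fun p (h : p.1 ⋖ p.2) => (h.lt.trans_le' bot_le).ne') ?_
    rintro ⟨x₁, y⟩ (h₁ : x₁ ⋖ y) ⟨x₂, _⟩ (h₂ : x₂ ⋖ _) rfl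
    rcases htot x₁ x₂ with h | h
    · rw [covBy_eq_of_le h₁ h₂ h]
    · rw [covBy_eq_of_le h₂ h₁ h]
  have h1 := Set.ncard_add_ncard_compl ({⊥} : Set α)
  rw [Set.ncard_singleton] at h1
  have := card_le_ncard_coverPairs_add_one (α := α)
  rw [nullity_eq_ncard_coverPairs]
  omega

lemma one_le_nullity_of_not_le [OrderBot α] {p q : α} (hpq : ¬ p ≤ q) (hqp : ¬ q ≤ p) :
    1 ≤ nullity α := by
  obtain ⟨c₁, hpc, hc₁⟩ := exists_le_covBy_of_lt (left_lt_sup.2 hqp)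
  obtain ⟨c₂, hqc, hc₂⟩ := exists_le_covBy_of_lt (right_lt_sup.2 hpq)
  have hne : c₁ ≠ c₂ := by
    rintro rfl
    exact hc₁.lt.not_ge (sup_le hpc hqc)
  set G := (coverGraph α).deleteEdges {s(c₁, p ⊔ q)}
  have hG_adj : ∀ c x, c ⋖ x → (x = p ⊔ q → c ≠ c₁) → G.Adj c x := by
    refine fun c x hc h => deleteEdges_adj.2 ⟨.inl hc, fun he => ?_⟩
    rcases Sym2.eq_iff.1 (Set.mem_singleton_iff.1 he) with ⟨rfl, rfl⟩ | ⟨rfl, rfl⟩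
    · exact h rfl rfl
    · exact hc.lt.asymm hc₁.lt
  have hG : G.Connected := by
    refine connected_of_forall_exists_adj_lt G fun x hx => ?_
    rcases eq_or_ne x (p ⊔ q) with rfl | hxv
    · exact ⟨c₂, hc₂.lt, hG_adj _ _ hc₂ fun _ => hne.symm⟩
    · obtain ⟨c, -, hc⟩ := exists_le_covBy_of_lt hx
      exact ⟨c, hc.lt, hG_adj _ _ hc fun h => absurd h hxv⟩
  have hedges : Nat.card G.edgeSet + 1 = (coverPairs α).ncard := by
    have hmem : s(c₁, p ⊔ q) ∈ (coverGraph α).edgeSet := .inl hc₁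
    rw [Nat.card_coe_set_eq, edgeSet_deleteEdges, Set.ncard_sdiff_singleton_add_one hmem,
      ← Nat.card_coe_set_eq, card_edgeSet_coverGraph_s14]
  have := hG.card_vert_le_card_edgeSet_add_one
  rw [nullity_eq_ncard_coverPairs]
  omega

lemma nullity_le_card_sub_three [BoundedOrder α] (hRC : IsChain (· ≤ ·) (RedSet α)) {p q : α}
    (hpq : ¬ p ≤ q) (hqp : ¬ q ≤ p) : nullity α ≤ Nat.card α - 3 := by
  have := ncard_coverPairs_add_four_le hRC hpq hqp
  rw [nullity_eq_ncard_coverPairs]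
  omega

variable [Nonempty α]

lemma nullity_eq_zero_iff : nullity α = 0 ↔ ∀ x y : α, x ≤ y ∨ y ≤ x := by
  cases nonempty_fintype α
  let := Fintype.toBoundedOrder α
  refine ⟨fun h x y => ?_, nullity_eq_zero_of_total⟩
  by_contra! hxy
  have := one_le_nullity_of_not_le hxy.1 hxy.2
  omega

lemma exists_nullity_eq_le_card_sub_three (hRC : IsChain (· ≤ ·) (RedSet α)) :
    ∃ k ≤ Nat.card α - 3, nullity α = k := by
  cases nonempty_fintype α
  let := Fintype.toBoundedOrder α
  by_cases htot : ∀ x y : α, x ≤ y ∨ y ≤ x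
  · exact ⟨0, Nat.zero_le _, nullity_eq_zero_of_total htot⟩
  · push Not at htot
    obtain ⟨p, q, hpq, hqp⟩ := htot
    have h1 := one_le_nullity_of_not_le hpq hqp
    have h2 := nullity_le_card_sub_three hRC hpq hqp
    exact ⟨(nullity α).toNat, by omega, by omega⟩

end NullityBounds

section Counting

variable {X β : Type*} [Finite X] {r : X → X → Prop}

lemma card_quot_eq_sum_card_quot_fiber (hr : Equivalence r) (P : X → Prop) (f : X → β)
    (hf : ∀ x y, r x y → f x = f y) (s : Finset β) (hs : ∀ x, P x → f x ∈ s) :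
    Nat.card (Quot fun x y : {x // P x} => r x y) =
      ∑ b ∈ s, Nat.card (Quot fun x y : {x // P x ∧ f x = b} => r x y) := by
  classical
  let Q := Quot fun x y : {x // P x} => r x y
  let := Fintype.ofFinite Q
  let F : Q → β := Quot.lift (fun x => f x) fun x y h => hf x y h
  have hfiber (b : β) : Nat.card (Quot fun x y : {x // P x ∧ f x = b} => r x y) =
      Nat.card {q : Q // F q = b} := by
    let φ : (Quot fun x y : {x // P x ∧ f x = b} => r x y) → {q : Q // F q = b} :=
      Quot.lift (fun x => ⟨Quot.mk _ ⟨x.1, x.2.1⟩, x.2.2⟩) fun _ _ h => Subtype.ext (Quot.sound h)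
    refine Nat.card_congr (Equiv.ofBijective φ ⟨?_, ?_⟩)
    · rintro ⟨x⟩ ⟨y⟩ h
      have h' : (Quot.mk _ ⟨x.1, x.2.1⟩ : Q) = Quot.mk _ ⟨y.1, y.2.1⟩ := congrArg Subtype.val h
      have hQ : Equivalence fun x y : {x // P x} => r x y := hr.comap Subtype.val
      exact Quot.sound (hQ.eqvGen_iff.1 (Quot.eqvGen_exact h'))
    · rintro ⟨⟨x⟩, hx⟩
      exact ⟨Quot.mk _ ⟨x.1, x.2, hx⟩, rfl⟩
  rw [Nat.card_eq_fintype_card, ← Finset.card_univ,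
    Finset.card_eq_sum_card_fiberwise (f := F) (t := s) fun q _ => ?_]
  · refine Finset.sum_congr rfl fun b _ => ?_
    rw [hfiber, Nat.card_eq_fintype_card, Fintype.card_subtype]
  · induction q using Quot.ind with
    | _ x => exact hs x.1 x.2

end Counting

lemma exists_equiv_fin_of_total {α : Type*} [Lattice α] [Fintype α]
    (htot : ∀ x y : α, x ≤ y ∨ y ≤ x) {m : ℕ} (hm : Fintype.card α = m) :
    ∃ e : α ≃ Fin m, ∀ x y, x ≤ y ↔ e x ≤ e y := by
  classical
  have : Std.Total (α := α) (· ≤ ·) := ⟨htot⟩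
  let := Lattice.toLinearOrder α
  let e := (Fintype.orderIsoFinOfCardEq α hm).symm
  exact ⟨e.toEquiv, fun _ _ => e.le_iff_le.symm⟩

instance {α : Type*} [Finite α] : Finite (Lattice α) :=
  Finite.of_injective (fun L : Lattice α => L.le) fun _ _ h =>
    Lattice.ext fun x y => iff_of_eq (congrFun (congrFun h x) y)

section FinLattices

variable {n : ℕ}

def IsomorphicLattices (L₁ L₂ : Lattice (Fin n)) : Prop :=
  ∃ e : Fin n ≃ Fin n, ∀ x y, (latPO L₁).le x y ↔ (latPO L₂).le (e x) (e y)

lemma isomorphicLattices_equivalence : Equivalence (@IsomorphicLattices n) where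
  refl _ := ⟨Equiv.refl _, fun _ _ => Iff.rfl⟩
  symm := fun ⟨e, he⟩ => ⟨e.symm, fun x y => by simpa using (he (e.symm x) (e.symm y)).symm⟩
  trans := fun ⟨e, he⟩ ⟨f, hf⟩ => ⟨e.trans f, fun x y => (he x y).trans (hf (e x) (e y))⟩

lemma IsomorphicLattices.nullity_eq {L₁ L₂ : Lattice (Fin n)} (h : IsomorphicLattices L₁ L₂) :
    @nullity _ (latPO L₁) = @nullity _ (latPO L₂) :=
  let ⟨e, he⟩ := h
  @nullity_congr _ _ (latPO L₁) (latPO L₂) ⟨e, (he _ _).symm⟩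

lemma isomorphicLattices_of_total {L : Lattice (Fin n)}
    (htot : ∀ x y, (latPO L).le x y ∨ (latPO L).le y x) : IsomorphicLattices L Fin.instLattice :=
  @exists_equiv_fin_of_total (Fin n) L _ htot n (Fintype.card_fin n)

lemma numIsoClasses_rcLatP_zero [NeZero n] : numIsoClasses n (RCLatP n 0) = 1 := by
  have htot (L : Lattice (Fin n)) (hL : RCLatP n 0 L) :
      ∀ x y, (latPO L).le x y ∨ (latPO L).le y x :=
    (@nullity_eq_zero_iff (Fin n) L _ _).1 hL.2
  have hstd : RCLatP n 0 Fin.instLattice :=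
    ⟨fun x y _ _ => le_total x y, nullity_eq_zero_iff.2 le_total⟩
  refine Nat.card_eq_one_iff_unique.2 ⟨⟨fun a b => ?_⟩, ⟨Quot.mk _ ⟨_, hstd⟩⟩⟩
  induction a using Quot.ind with | _ L₁ => ?_
  induction b using Quot.ind with | _ L₂ => ?_
  exact Quot.sound <| isomorphicLattices_equivalence.trans
    (isomorphicLattices_of_total (htot L₁.1 L₁.2))
    (isomorphicLattices_equivalence.symm (isomorphicLattices_of_total (htot L₂.1 L₂.2)))

end FinLattices

/-- For `n ≥ 1`: `|𝓛(n)| = 1 + Σ_{k=1}^{n-3} |𝓛(n,k)|`. -/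
theorem stmt14 (n : ℕ) (hn : 1 ≤ n) :
    numIsoClasses n (fun L => IsRCLat L) =
      1 + ∑ k ∈ Finset.Icc 1 (n - 3), numIsoClasses n (RCLatP n k) := by
  have : NeZero n := ⟨by omega⟩
  have hsplit := card_quot_eq_sum_card_quot_fiber isomorphicLattices_equivalence
    (fun L => IsRCLat L) (fun L => @nullity _ (latPO L)) (fun _ _ h => h.nullity_eq)
    ((Finset.Icc 0 (n - 3)).map Nat.castEmbedding) fun L hL => by
      obtain ⟨k, hk, hη⟩ :=
        @exists_nullity_eq_le_card_sub_three (Fin n) L _ _ fun _ hx _ hy _ => hL _ _ hx hy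
      simp only [Nat.card_eq_fintype_card, Fintype.card_fin] at hk
      exact Finset.mem_map.2 ⟨k, Finset.mem_Icc.2 ⟨k.zero_le, hk⟩, hη.symm⟩
  refine hsplit.trans ?_
  rw [Finset.sum_map, ← Finset.insert_Icc_add_one_left_eq_Icc (Nat.zero_le _),
    Finset.sum_insert (by simp), zero_add]
  exact congrArg₂ (· + ·) numIsoClasses_rcLatP_zero rfl
end
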